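/- arXiv:2411.12251 — 7 statements merged into one kernel-verified Lean document; each statement's English description precedes it below -/
import Mathlib

section
/- Let Γ be a finite abelian group of odd order and Q : Γ → ℂˣ a quadratic form. Then there exists a unique quadratic form q : Γ → ℂˣ with q(a)² = Q(a) for all a ∈ Γ. -/
/-- A quadratic form on an abelian group `Γ` is a function `Q : Γ → ℂˣ` with
`Q (n • a) = Q a ^ n²` for all `n ∈ ℤ`, whose associated map
`B_Q(a,b) = Q(a+b) Q(a)⁻¹ Q(b)⁻¹` is bimultiplicative. -/
def IsQuadraticForm {Γ : Type*} [AddCommGroup Γ] (Q : Γ → ℂˣ) : Prop :=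
  (∀ (n : ℤ) (a : Γ), Q (n • a) = Q a ^ (n ^ 2)) ∧
  (∀ a a' b : Γ, Q (a + a' + b) * (Q (a + a'))⁻¹ * (Q b)⁻¹ =
    (Q (a + b) * (Q a)⁻¹ * (Q b)⁻¹) * (Q (a' + b) * (Q a')⁻¹ * (Q b)⁻¹)) ∧
  (∀ a b b' : Γ, Q (a + (b + b')) * (Q a)⁻¹ * (Q (b + b'))⁻¹ =
    (Q (a + b) * (Q a)⁻¹ * (Q b)⁻¹) * (Q (a + b') * (Q a)⁻¹ * (Q b')⁻¹))

lemma qf_pow_card_sq {Γ : Type*} [AddCommGroup Γ] [Fintype Γ] {q : Γ → ℂˣ}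
    (hq : IsQuadraticForm q) (a : Γ) : q a ^ Fintype.card Γ ^ 2 = 1 := by
  have h0 : q 0 = 1 := by simpa using hq.1 0 0
  have h := hq.1 (Fintype.card Γ) a
  rw [natCast_zsmul, card_nsmul_eq_zero, h0] at h
  have : q a ^ ((Fintype.card Γ : ℤ) ^ 2) = q a ^ (Fintype.card Γ ^ 2) := by
    rw [← zpow_natCast]; push_cast; ring_nf
  rw [this] at h; exact h.symm

/-- If `Γ` is a finite abelian group of odd order and `Q` a quadratic form on `Γ`,
then there exists a unique quadratic form `q` with `q(a)² = Q(a)` for all `a`. -/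
theorem stmt_2 (Γ : Type*) [AddCommGroup Γ] [Fintype Γ] (hodd : Odd (Fintype.card Γ))
    (Q : Γ → ℂˣ) (hQ : IsQuadraticForm Q) :
    ∃! q : Γ → ℂˣ, IsQuadraticForm q ∧ ∀ a : Γ, (q a) ^ 2 = Q a := by
  obtain ⟨m, hm⟩ : Odd (Fintype.card Γ ^ 2) := hodd.pow
  set q : Γ → ℂˣ := fun a => Q a ^ (m + 1) with hqdef
  have hsq : ∀ a, q a ^ 2 = Q a := by
    intro a
    have h1 : Q a ^ (Fintype.card Γ ^ 2) = 1 := qf_pow_card_sq hQ a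
    calc q a ^ 2 = Q a ^ (Fintype.card Γ ^ 2) * Q a := by
          rw [hqdef, ← pow_mul, hm, ← pow_succ]; congr 1; ring
      _ = Q a := by rw [h1, one_mul]
  have hqf : IsQuadraticForm q := by
    refine ⟨fun n a => ?_, fun a a' b => ?_, fun a b b' => ?_⟩
    · simp only [hqdef, hQ.1 n a, ← zpow_natCast, ← zpow_mul]; ring_nf
    · simp only [hqdef, ← inv_pow, ← mul_pow, hQ.2.1 a a' b]
    · simp only [hqdef, ← inv_pow, ← mul_pow, hQ.2.2 a b b']
  refine ⟨q, ⟨hqf, hsq⟩, ?_⟩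
  rintro q' ⟨hq', hsq'⟩
  funext a
  have key : ∀ (r : Γ → ℂˣ), IsQuadraticForm r → r a ^ 2 = Q a → r a = ((Q a) ^ m)⁻¹ := by
    intro r hr hra
    have h1 : r a ^ (Fintype.card Γ ^ 2) = 1 := qf_pow_card_sq hr a
    rw [hm, pow_succ, pow_mul, hra] at h1
    exact eq_inv_of_mul_eq_one_right h1
  rw [key q' hq' (hsq' a), key q hqf (hsq a)]
end

section
/- Let Γ be a finite abelian group and σ : Γ × Γ → ℂˣ a normalised symmetric 2-cochain such that ∂(σ)(a;b,c) := σ(a,b)σ(a,c)σ(a,b+c)⁻¹ takes values in {±1} and, for each fixed b,c, the map a ↦ ∂(σ)(a;b,c) is a group homomorphism Γ → {±1}. Then the pair (σ, ∂(σ)) is an abelian 3-cocycle on Γ, i.e. ω := ∂(σ) satisfies the 3-cocycle identity ω(b,c,d)ω(a,b+c,d)ω(a,b,c) = ω(a+b,c,d)ω(a,b,c+d) and the two hexagon equations ω(b,a,c)/(ω(a,b,c)ω(b,c,a)) = σ(a,b+c)/(σ(a,b)σ(a,c)) and ω(a,b,c)ω(c,a,b)/ω(a,c,b) = σ(a+b,c)/(σ(a,c)σ(b,c)).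 -/
/-!
`dOmega σ a` is the coboundary of the 1-cochain `σ a`, hence a 2-cocycle in the last two
variables; together with multiplicativity in `a` this gives the 3-cocycle identity. It is
also symmetric in its last two variables, which reduces each hexagon to the definition of
`dOmega`, read through `σ`-symmetry and `ω = ω⁻¹` for the second one.
-/

/-- The coboundary-like map `∂(σ)(a;b,c) = σ(a,b) σ(a,c) σ(a,b+c)⁻¹` measuring the
failure of bimultiplicativity of a 2-cochain `σ`. -/
def dOmega {Γ : Type*} [AddCommGroup Γ] (σ : Γ → Γ → ℂˣ) (a b c : Γ) : ℂˣ :=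
  σ a b * σ a c * (σ a (b + c))⁻¹

section
variable {Γ : Type*} [AddCommGroup Γ] (σ : Γ → Γ → ℂˣ)

theorem dOmega_comm_right (a b c : Γ) : dOmega σ a b c = dOmega σ a c b := by
  rw [dOmega, dOmega, mul_comm (σ a b), add_comm]

theorem inv_dOmega (a b c : Γ) : (dOmega σ a b c)⁻¹ = σ a (b + c) / (σ a b * σ a c) := by
  rw [dOmega, mul_inv, inv_inv, div_eq_inv_mul]

theorem dOmega_add_mul_dOmega (a b c d : Γ) :
    dOmega σ a (b + c) d * dOmega σ a b c = dOmega σ a c d * dOmega σ a b (c + d) := by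
  ext
  simp only [dOmega, add_assoc, Units.val_mul, Units.val_inv_eq_inv_val]
  field_simp

end

theorem stmt_3_general (Γ : Type*) [AddCommGroup Γ] (σ : Γ → Γ → ℂˣ)
    (hsymm : ∀ a b : Γ, σ a b = σ b a)
    (hpm : ∀ a b c : Γ, dOmega σ a b c = 1 ∨ dOmega σ a b c = -1)
    (hhom : ∀ a a' b c : Γ, dOmega σ (a + a') b c = dOmega σ a b c * dOmega σ a' b c) :
    (∀ a b c d : Γ,
      dOmega σ b c d * dOmega σ a (b + c) d * dOmega σ a b c =
        dOmega σ (a + b) c d * dOmega σ a b (c + d)) ∧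
    (∀ a b c : Γ,
      dOmega σ b a c / (dOmega σ a b c * dOmega σ b c a) =
        σ a (b + c) / (σ a b * σ a c)) ∧
    (∀ a b c : Γ,
      dOmega σ a b c * dOmega σ c a b / dOmega σ a c b =
        σ (a + b) c / (σ a c * σ b c)) := by
  refine ⟨fun a b c d => ?_, fun a b c => ?_, fun a b c => ?_⟩
  · rw [hhom, mul_assoc, dOmega_add_mul_dOmega, mul_left_comm, mul_assoc]
  · rw [dOmega_comm_right σ b a c, div_mul_cancel_right, inv_dOmega]
  · have inv_eq_self : (dOmega σ c a b)⁻¹ = dOmega σ c a b := by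
      rcases hpm c a b with h | h <;> simp [h]
    rw [dOmega_comm_right σ a b c, mul_div_cancel_left, ← inv_eq_self, inv_dOmega,
      hsymm c, hsymm c, hsymm c]

/-- If `σ` is a normalised symmetric 2-cochain on a finite abelian group `Γ` such that
`∂(σ)` takes values in `{±1}` and is a group homomorphism in the first argument, then
`(σ, ∂(σ))` is an abelian 3-cocycle: `ω := ∂(σ)` satisfies the 3-cocycle identity and
the two hexagon equations. -/
theorem stmt_3 (Γ : Type*) [AddCommGroup Γ] [Finite Γ] (σ : Γ → Γ → ℂˣ)
    (hnorm : ∀ a : Γ, σ a 0 = 1 ∧ σ 0 a = 1)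
    (hsymm : ∀ a b : Γ, σ a b = σ b a)
    (hpm : ∀ a b c : Γ, dOmega σ a b c = 1 ∨ dOmega σ a b c = -1)
    (hhom : ∀ a a' b c : Γ, dOmega σ (a + a') b c = dOmega σ a b c * dOmega σ a' b c) :
    (∀ a b c d : Γ,
      dOmega σ b c d * dOmega σ a (b + c) d * dOmega σ a b c =
        dOmega σ (a + b) c d * dOmega σ a b (c + d)) ∧
    (∀ a b c : Γ,
      dOmega σ b a c / (dOmega σ a b c * dOmega σ b c a) =
        σ a (b + c) / (σ a b * σ a c)) ∧
    (∀ a b c : Γ,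
      dOmega σ a b c * dOmega σ c a b / dOmega σ a c b =
        σ (a + b) c / (σ a c * σ b c)) :=
  stmt_3_general Γ σ hsymm hpm hhom
end

section
/- Let Γ = ℤ/n with n even, Q(x) = exp(2πi·x²/(2n)) and q(x) = exp(2πi·x²/(4n)) on representatives 0 ≤ x < n, and σ(x,y) = exp(2πi·xy/(2n)), ω = ∂(σ) as above. Set δ = 0 if 4 ∣ n and δ = 1 otherwise. Then q(a)² = Q(a) and q(a+b)q(a)⁻¹q(b)⁻¹ = σ(a,b)·ω(a+b,a,b)·ω(δ,a,b) for all a,b ∈ ℤ/n. -/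
/-- `σ(x,y) = e^{2πi·xy/(2n)}` on representatives `0 ≤ x,y < n` of `ℤ/n`. -/
noncomputable def sigmaCyc (n : ℕ) (u v : ZMod n) : ℂ :=
  Complex.exp (2 * Real.pi * Complex.I * (u.val * v.val) / (2 * n))

/-- `ρ(x,y) = 1` if the integer sum of the representatives is `≥ n`, and `0` otherwise. -/
def rhoCyc (n : ℕ) (x y : ZMod n) : ℕ :=
  if n ≤ x.val + y.val then 1 else 0

/-- `ω = ∂(σ)`, i.e. `ω(a;x,y) = (-1)^{a·ρ(x,y)}`. -/
def omegaCyc (n : ℕ) (a x y : ZMod n) : ℂ :=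
  (-1 : ℂ) ^ (a.val * rhoCyc n x y)

/-- `Q(x) = e^{2πi·x²/(2n)}` on representatives. -/
noncomputable def Qcyc (n : ℕ) (x : ZMod n) : ℂ :=
  Complex.exp (2 * Real.pi * Complex.I * (x.val ^ 2) / (2 * n))

/-- `q(x) = e^{2πi·x²/(4n)}` on representatives. -/
noncomputable def qcyc (n : ℕ) (x : ZMod n) : ℂ :=
  Complex.exp (2 * Real.pi * Complex.I * (x.val ^ 2) / (4 * n))

/-- For `Γ = ℤ/n` with `n` even, with `Q`, `q`, `σ`, `ω = ∂(σ)` as above and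
`δ = 0` if `4 ∣ n`, `δ = 1` otherwise, one has `q(a)² = Q(a)` and
`q(a+b) q(a)⁻¹ q(b)⁻¹ = σ(a,b)·ω(a+b,a,b)·ω(δ,a,b)` for all `a, b ∈ ℤ/n`. -/
theorem stmt_5 (n : ℕ) [NeZero n] (hn : Even n) (a b : ZMod n) :
    qcyc n a ^ 2 = Qcyc n a ∧
    qcyc n (a + b) * (qcyc n a)⁻¹ * (qcyc n b)⁻¹ =
      sigmaCyc n a b * omegaCyc n (a + b) a b *
        omegaCyc n (if (4 : ℕ) ∣ n then (0 : ZMod n) else 1) a b := by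
  have hn0 : (n:ℂ) ≠ 0 := Nat.cast_ne_zero.mpr (NeZero.ne n)
  have hneg : ∀ k : ℕ, ((-1:ℂ))^k = Complex.exp (k * (Real.pi * Complex.I)) := by
    intro k
    rw [Complex.exp_nat_mul, Complex.exp_pi_mul_I]
  refine ⟨?_, ?_⟩
  · rw [qcyc, Qcyc, sq, ← Complex.exp_add]
    congr 1
    field_simp
    ring
  · have hAn : a.val < n := ZMod.val_lt a
    have hBn : b.val < n := ZMod.val_lt b
    by_cases hle : n ≤ a.val + b.val
    · have hvadd : ((a+b).val : ℂ) = a.val + b.val - n := by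
        have h1 : (a+b).val = a.val + b.val - n := by
          rw [ZMod.val_add, Nat.mod_eq_sub_mod hle, Nat.mod_eq_of_lt (by omega)]
        rw [h1, Nat.cast_sub hle]
        push_cast
        ring
      have hrho : rhoCyc n a b = 1 := if_pos hle
      by_cases h4 : (4:ℕ) ∣ n
      · obtain ⟨m, hm⟩ := h4
        have hm0 : (m:ℂ) ≠ 0 := by
          intro h
          apply hn0
          rw [hm]
          push_cast
          rw [h]; ring
        have hnm : (n:ℂ) = 4 * m := by rw [hm]; push_cast; ring
        simp only [qcyc, sigmaCyc, omegaCyc, hrho, if_pos (show (4:ℕ) ∣ n from ⟨m, hm⟩), ZMod.val_zero,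
          mul_one, zero_mul, pow_zero, hneg]
        rw [← Complex.exp_neg, ← Complex.exp_neg, ← Complex.exp_add,
          ← Complex.exp_add, ← Complex.exp_add, ← Complex.exp_add]
        rw [Complex.exp_eq_exp_iff_exists_int]
        refine ⟨3*m - a.val - b.val, ?_⟩
        rw [hvadd, hnm]
        push_cast
        field_simp
        ring
      · have h2 : (2:ℕ) ∣ n := hn.two_dvd
        obtain ⟨m, hm⟩ := h2
        have hmodd : ¬ (2 ∣ m) := by
          intro ⟨t, ht⟩
          exact h4 ⟨t, by omega⟩
        obtain ⟨t, ht⟩ : ∃ t, m = 2*t + 1 := ⟨m/2, by omega⟩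
        have hnt : (n:ℂ) = 4 * t + 2 := by
          have : n = 4*t+2 := by omega
          rw [this]; push_cast; ring
        have h1n : Fact (1 < n) := ⟨by omega⟩
        have hrho : rhoCyc n a b = 1 := if_pos hle
        simp only [qcyc, sigmaCyc, omegaCyc, hrho, if_neg h4, ZMod.val_one,
          mul_one, one_mul, hneg]
        rw [← Complex.exp_neg, ← Complex.exp_neg, ← Complex.exp_add,
          ← Complex.exp_add, ← Complex.exp_add, ← Complex.exp_add]
        rw [Complex.exp_eq_exp_iff_exists_int]
        refine ⟨3*t + 1 - a.val - b.val, ?_⟩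
        rw [hvadd, hnt]
        push_cast
        have h20 : (4 * (t:ℂ) + 2) ≠ 0 := by rw [← hnt]; exact hn0
        field_simp
        ring
    · have hvadd : ((a+b).val : ℂ) = a.val + b.val := by
        have h1 : (a+b).val = a.val + b.val := by
          rw [ZMod.val_add, Nat.mod_eq_of_lt (by omega)]
        rw [h1]; push_cast; ring
      have hrho : rhoCyc n a b = 0 := if_neg hle
      simp only [qcyc, sigmaCyc, omegaCyc, hrho, mul_zero, pow_zero, mul_one]
      rw [← Complex.exp_neg, ← Complex.exp_neg, ← Complex.exp_add, ← Complex.exp_add]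
      congr 1
      rw [hvadd]
      field_simp
      ring
end

section
/- Let Γ be a finite abelian group with a nondegenerate symmetric bimultiplicative form B_Q : Γ × Γ → ℂˣ, and let σ : Γ × Γ → ℂˣ be a normalised symmetric 2-cochain with σ² = B_Q such that ω(a,b,c) := σ(a,b)σ(a,c)σ(a,b+c)⁻¹ takes values in {±1} and is a homomorphism in a. Let s, l ∈ Γ with s − l ∈ 2Γ, and let r̄ be a coset of 2Γ in Γ. Then |2Γ|⁻¹ · Σ_{r ∈ r̄} σ(r,s)·σ(r,l)⁻¹ equals 1 if s = l and 0 otherwise. -/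
open scoped Classical

/-!
Write `s = l + 2t`. Expanding `ω`, the summand `σ(r,s) σ(r,l)⁻¹` equals
`B(r,t) ω(r;t,t)⁻¹ ω(r;l,2t)⁻¹`, so it is a character `χ` of `Γ`. On `2Γ` it is
`χ(2c) = χ(c)² = σ(c,s)² σ(c,l)⁻² = B(c, s - l)`, which by nondegeneracy is not identically
`1` when `s ≠ l`; a character that is nontrivial on `2Γ` sums to zero over every coset of `2Γ`.
-/

open Finset

theorem AddChar.sum_eq_zero_of_add_mem {G R : Type*} [AddCommGroup G] [CommSemiring R]
    [IsDomain R] (ψ : AddChar G R) {S : Finset G} {g : G} (hS : ∀ x ∈ S, g + x ∈ S)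
    (hg : ψ g ≠ 1) :
    ∑ x ∈ S, ψ x = 0 := by
  have hshift : S.map (addLeftEmbedding g) = S :=
    map_eq_of_subset fun _ hy ↦ by
      obtain ⟨x, hx, rfl⟩ := mem_map.mp hy
      exact hS x hx
  refine eq_zero_of_mul_eq_self_left hg ?_
  conv_rhs => rw [← hshift, sum_map]
  simp only [mul_sum, addLeftEmbedding_apply, AddChar.map_add_eq_mul]

theorem Finset.card_filter_exists_add_nsmul_eq {G : Type*} [AddCommGroup G] [Fintype G]
    (n : ℕ) (r₀ : G) :
    #(univ.filter fun r : G => ∃ a, r = r₀ + n • a) =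
      #(univ.filter fun x : G => ∃ a, x = n • a) := by
  rw [← card_map (addLeftEmbedding r₀) (s := univ.filter fun x : G => ∃ a, x = n • a)]
  congr 1
  ext r
  simp [eq_comm]

section SigmaRatio

variable {Γ : Type*} [AddCommGroup Γ] {B σ : Γ → Γ → ℂˣ}

theorem sigma_add_two_nsmul_mul_inv (hσsq : ∀ a b, σ a b ^ 2 = B a b) (r l t : Γ) :
    σ r (l + 2 • t) * (σ r l)⁻¹ =
      B r t * (dOmega σ r t t)⁻¹ * (dOmega σ r l (2 • t))⁻¹ := by
  simp only [dOmega, ← hσsq, two_nsmul]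
  ext
  push_cast
  field_simp

def sigmaRatioChar (hσsq : ∀ a b, σ a b ^ 2 = B a b)
    (hBbi₁ : ∀ a a' b, B (a + a') b = B a b * B a' b)
    (hωhom : ∀ a a' b c, dOmega σ (a + a') b c = dOmega σ a b c * dOmega σ a' b c)
    {s l t : Γ} (hs : s = l + 2 • t) : AddChar Γ ℂˣ :=
  have map_add (r r' : Γ) :
      σ (r + r') s * (σ (r + r') l)⁻¹ =
        σ r s * (σ r l)⁻¹ * (σ r' s * (σ r' l)⁻¹) := by
    simp only [hs, sigma_add_two_nsmul_mul_inv hσsq, hBbi₁, hωhom, mul_inv]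
    ac_rfl
  { toFun r := σ r s * (σ r l)⁻¹
    map_zero_eq_one' := by
      simpa using map_add 0 0
    map_add_eq_mul' := map_add }

variable (hσsq : ∀ a b, σ a b ^ 2 = B a b)
    (hBbi₁ : ∀ a a' b, B (a + a') b = B a b * B a' b)
    (hωhom : ∀ a a' b c, dOmega σ (a + a') b c = dOmega σ a b c * dOmega σ a' b c)
    {s l t : Γ} (hs : s = l + 2 • t)

@[simp]
theorem sigmaRatioChar_apply (r : Γ) :
    sigmaRatioChar hσsq hBbi₁ hωhom hs r = σ r s * (σ r l)⁻¹ :=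
  rfl

theorem sigmaRatioChar_two_nsmul (hBbi₂ : ∀ a b b', B a (b + b') = B a b * B a b') (c : Γ) :
    sigmaRatioChar hσsq hBbi₁ hωhom hs (2 • c) = B c (s - l) := by
  rw [AddChar.map_nsmul_eq_pow, sigmaRatioChar_apply, mul_pow, inv_pow, hσsq, hσsq,
    ← sub_add_cancel s l, hBbi₂, sub_add_cancel, mul_inv_cancel_right]

end SigmaRatio

theorem exists_apply_sub_ne_one {Γ M : Type*} [AddCommGroup Γ] [One M] {B : Γ → Γ → M}
    (hBsym : ∀ a b, B a b = B b a) (hBnd : ∀ a, (∀ b, B a b = 1) → a = 0) {s l : Γ}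
    (hsl : s ≠ l) : ∃ c, B c (s - l) ≠ 1 := by
  by_contra! h
  exact hsl (sub_eq_zero.mp (hBnd _ fun b ↦ (hBsym _ b).trans (h b)))

theorem stmt_7_general (Γ : Type*) [AddCommGroup Γ] [Fintype Γ]
    (B σ : Γ → Γ → ℂˣ)
    (hBsym : ∀ a b : Γ, B a b = B b a)
    (hBbi₁ : ∀ a a' b : Γ, B (a + a') b = B a b * B a' b)
    (hBbi₂ : ∀ a b b' : Γ, B a (b + b') = B a b * B a b')
    (hBnd : ∀ a : Γ, (∀ b : Γ, B a b = 1) → a = 0)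
    (hσsq : ∀ a b : Γ, (σ a b) ^ 2 = B a b)
    (hωhom : ∀ a a' b c : Γ, dOmega σ (a + a') b c = dOmega σ a b c * dOmega σ a' b c)
    (s l r₀ : Γ) (hsl : ∃ a : Γ, s - l = 2 • a) :
    (((Finset.univ.filter fun x : Γ => ∃ a : Γ, x = 2 • a).card : ℂ))⁻¹ *
      ∑ r ∈ Finset.univ.filter fun r : Γ => ∃ a : Γ, r = r₀ + 2 • a,
        ((σ r s : ℂˣ) : ℂ) * (((σ r l : ℂˣ) : ℂ))⁻¹ =
      if s = l then 1 else 0 := by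
  split_ifs with h
  · subst h
    have hcard : #(univ.filter fun x : Γ => ∃ a : Γ, x = 2 • a) ≠ 0 :=
      card_ne_zero.mpr ⟨0, mem_filter.mpr ⟨mem_univ _, 0, (nsmul_zero 2).symm⟩⟩
    simp only [ne_eq, Units.ne_zero, not_false_eq_true, mul_inv_cancel₀, sum_const, nsmul_one]
    rw [card_filter_exists_add_nsmul_eq]
    exact inv_mul_cancel₀ (Nat.cast_ne_zero.mpr hcard)
  · obtain ⟨t, ht⟩ := hsl
    obtain ⟨c, hc⟩ := exists_apply_sub_ne_one hBsym hBnd h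
    have hs : s = l + 2 • t := eq_add_of_sub_eq' ht
    let χ := (Units.coeHom ℂ).compAddChar (sigmaRatioChar hσsq hBbi₁ hωhom hs)
    have hχc : χ (2 • c) ≠ 1 := by
      rw [show χ (2 • c) = B c (s - l) from
        congrArg Units.val (sigmaRatioChar_two_nsmul hσsq hBbi₁ hωhom hs hBbi₂ c)]
      exact Units.val_eq_one.not.mpr hc
    have hcoset : ∀ r ∈ univ.filter fun r : Γ => ∃ a : Γ, r = r₀ + 2 • a,
        2 • c + r ∈ univ.filter fun r : Γ => ∃ a : Γ, r = r₀ + 2 • a := by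
      simp only [mem_filter, mem_univ, true_and, forall_exists_index]
      rintro _ a rfl
      exact ⟨c + a, by rw [smul_add]; abel⟩
    have hsum := χ.sum_eq_zero_of_add_mem hcoset hχc
    simp only [χ, MonoidHom.compAddChar_apply, Function.comp_apply, Units.coeHom_apply,
      sigmaRatioChar_apply, Units.val_mul, Units.val_inv_eq_inv_val] at hsum
    rw [hsum, mul_zero]

/-- The character sum lemma: if `B_Q` is nondegenerate symmetric bimultiplicative,
`σ` a normalised symmetric 2-cochain with `σ² = B_Q` whose `ω = ∂(σ)` takes values in
`{±1}` and is a homomorphism in the first argument, `s - l ∈ 2Γ` and `r̄ = r₀ + 2Γ` a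
coset of `2Γ`, then `|2Γ|⁻¹ Σ_{r ∈ r̄} σ(r,s) σ(r,l)⁻¹ = δ_{s,l}`. -/
theorem stmt_7 (Γ : Type*) [AddCommGroup Γ] [Fintype Γ]
    (B σ : Γ → Γ → ℂˣ)
    (hBsym : ∀ a b : Γ, B a b = B b a)
    (hBbi₁ : ∀ a a' b : Γ, B (a + a') b = B a b * B a' b)
    (hBbi₂ : ∀ a b b' : Γ, B a (b + b') = B a b * B a b')
    (hBnd : ∀ a : Γ, (∀ b : Γ, B a b = 1) → a = 0)
    (hσsym : ∀ a b : Γ, σ a b = σ b a)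
    (hσnorm : ∀ a : Γ, σ a 0 = 1 ∧ σ 0 a = 1)
    (hσsq : ∀ a b : Γ, (σ a b) ^ 2 = B a b)
    (hωpm : ∀ a b c : Γ, dOmega σ a b c = 1 ∨ dOmega σ a b c = -1)
    (hωhom : ∀ a a' b c : Γ, dOmega σ (a + a') b c = dOmega σ a b c * dOmega σ a' b c)
    (s l r₀ : Γ) (hsl : ∃ a : Γ, s - l = 2 • a) :
    (((Finset.univ.filter fun x : Γ => ∃ a : Γ, x = 2 • a).card : ℂ))⁻¹ *
      ∑ r ∈ Finset.univ.filter fun r : Γ => ∃ a : Γ, r = r₀ + 2 • a,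
        ((σ r s : ℂˣ) : ℂ) * (((σ r l : ℂˣ) : ℂ))⁻¹ =
      if s = l then 1 else 0 :=
  stmt_7_general Γ B σ hBsym hBbi₁ hBbi₂ hBnd hσsq hωhom s l r₀ hsl
end

section
/- Let L be an even lattice with ⟨u,v⟩ ∈ 2ℤ for all u,v ∈ L, with dual L* and Γ = L*/L. Then the pairing p̄(a, u) := exp(2πi⟨â,u⟩/2) for a ∈ Γ, u ∈ L (with â any representative of a) is well-defined, takes values in {±1}, and descends to a perfect pairing p : Γ/2Γ × L/2L → {±1}. -/
open Matrix

/-!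
For `x ∈ L*` and `v ∈ L` the value `⟨x, v⟩` is an integer, so `p̄(x, v) = (-1) ^ ⟨x, v⟩` is
biadditive and equals `1` exactly when `⟨x, v⟩` is even. Evenness of `L` puts `L` (and trivially
`2L*`) in the left kernel, and `2L` is in the right kernel. Conversely, if `⟨x, ·⟩` is even on
`L` then `x / 2 ∈ L*`; and pairing `v` with the dual basis `eⱼ G⁻¹` of `L*` reads off its
coordinates, so a vector in the right kernel has even coordinates.
-/

noncomputable section

/-- The bilinear form on `ℚ^d` given by the Gram matrix `G`. -/
def bilQ {d : ℕ} (G : Matrix (Fin d) (Fin d) ℚ) (x y : Fin d → ℚ) : ℚ :=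
  x ⬝ᵥ G.mulVec y

/-- The canonical inclusion of integer vectors into `ℚ^d`. -/
def intVec {d : ℕ} (v : Fin d → ℤ) : Fin d → ℚ := fun i => (v i : ℚ)

/-- The lattice `L = ℤ^d` sitting inside `ℚ^d`. -/
def latticeL (d : ℕ) : AddSubgroup (Fin d → ℚ) where
  carrier := {x | ∃ v : Fin d → ℤ, x = intVec v}
  zero_mem' := ⟨0, by funext i; simp [intVec]⟩
  add_mem' := by
    rintro x y ⟨v, rfl⟩ ⟨w, rfl⟩
    exact ⟨v + w, by funext i; simp [intVec]⟩
  neg_mem' := by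
    rintro x ⟨v, rfl⟩
    exact ⟨-v, by funext i; simp [intVec]⟩

/-- The dual lattice `L* = {x ∈ ℚ^d : ⟨x, w⟩ ∈ ℤ for all w ∈ L}`. -/
def dualL {d : ℕ} (G : Matrix (Fin d) (Fin d) ℚ) : AddSubgroup (Fin d → ℚ) where
  carrier := {x | ∀ v : Fin d → ℤ, ∃ m : ℤ, bilQ G x (intVec v) = m}
  zero_mem' := fun v => ⟨0, by simp [bilQ]⟩
  add_mem' := by
    intro x y hx hy v
    obtain ⟨m, hm⟩ := hx v
    obtain ⟨m', hm'⟩ := hy v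
    refine ⟨m + m', ?_⟩
    simp only [bilQ, add_dotProduct] at *
    rw [hm, hm']
    push_cast
    ring
  neg_mem' := by
    intro x hx v
    obtain ⟨m, hm⟩ := hx v
    refine ⟨-m, ?_⟩
    simp only [bilQ, neg_dotProduct] at *
    rw [hm]
    push_cast
    ring

/-- The pairing `p̄(x, v) = e^{2πi⟨x,v⟩/2} = (-1)^{⟨x,v⟩}` for `x ∈ L*` (via a
representative) and `v ∈ L`, valued in `{±1} = ℤˣ`. -/
def pairP {d : ℕ} (G : Matrix (Fin d) (Fin d) ℚ) (x : Fin d → ℚ) (v : Fin d → ℤ) : ℤˣ :=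
  (-1 : ℤˣ) ^ (bilQ G x (intVec v)).num

variable {d : ℕ} {G : Matrix (Fin d) (Fin d) ℚ}

lemma intVec_add (v w : Fin d → ℤ) : intVec (v + w) = intVec v + intVec w := by
  funext i; simp [intVec]

lemma intVec_nsmul (n : ℕ) (u : Fin d → ℤ) : intVec (n • u) = (n : ℚ) • intVec u := by
  funext i; simp [intVec]

lemma bilQ_add_left (x y v : Fin d → ℚ) : bilQ G (x + y) v = bilQ G x v + bilQ G y v :=
  add_dotProduct _ _ _

lemma bilQ_add_right (x v w : Fin d → ℚ) : bilQ G x (v + w) = bilQ G x v + bilQ G x w := by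
  simp only [bilQ, mulVec_add, dotProduct_add]

lemma bilQ_smul_left (c : ℚ) (x v : Fin d → ℚ) : bilQ G (c • x) v = c * bilQ G x v :=
  smul_dotProduct _ _ _

lemma bilQ_smul_right (c : ℚ) (x v : Fin d → ℚ) : bilQ G x (c • v) = c * bilQ G x v := by
  simp only [bilQ, mulVec_smul, dotProduct_smul, smul_eq_mul]

lemma bilQ_nsmul_left (n : ℕ) (x v : Fin d → ℚ) : bilQ G (n • x) v = n * bilQ G x v := by
  rw [← Nat.cast_smul_eq_nsmul ℚ, bilQ_smul_left]

lemma pairP_of_bilQ_eq {x : Fin d → ℚ} {v : Fin d → ℤ} {m : ℤ}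
    (h : bilQ G x (intVec v) = m) : pairP G x v = (-1) ^ m := by
  rw [pairP, h, Rat.num_intCast]

lemma pairP_eq_one_iff_even {x : Fin d → ℚ} {v : Fin d → ℤ} {m : ℤ}
    (h : bilQ G x (intVec v) = m) : pairP G x v = 1 ↔ Even m := by
  rw [pairP_of_bilQ_eq h, neg_one_zpow_eq_ite]
  split_ifs with hm <;> simp [hm]

lemma pairP_add_left {x y : Fin d → ℚ} (hx : x ∈ dualL G) (hy : y ∈ dualL G)
    (v : Fin d → ℤ) : pairP G (x + y) v = pairP G x v * pairP G y v := by
  obtain ⟨m, hm⟩ := hx v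
  obtain ⟨m', hm'⟩ := hy v
  have hsum : bilQ G (x + y) (intVec v) = ((m + m' : ℤ) : ℚ) := by
    rw [bilQ_add_left, hm, hm', Int.cast_add]
  rw [pairP_of_bilQ_eq hsum, pairP_of_bilQ_eq hm, pairP_of_bilQ_eq hm', _root_.zpow_add]

lemma pairP_add_right {x : Fin d → ℚ} (hx : x ∈ dualL G) (v w : Fin d → ℤ) :
    pairP G x (v + w) = pairP G x v * pairP G x w := by
  obtain ⟨m, hm⟩ := hx v
  obtain ⟨m', hm'⟩ := hx w
  have hsum : bilQ G x (intVec (v + w)) = ((m + m' : ℤ) : ℚ) := by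
    rw [intVec_add, bilQ_add_right, hm, hm', Int.cast_add]
  rw [pairP_of_bilQ_eq hsum, pairP_of_bilQ_eq hm, pairP_of_bilQ_eq hm', _root_.zpow_add]

lemma pairP_two_nsmul_right {x : Fin d → ℚ} (hx : x ∈ dualL G) (u : Fin d → ℤ) :
    pairP G x (2 • u) = 1 := by
  obtain ⟨m, hm⟩ := hx u
  have h : bilQ G x (intVec (2 • u)) = ((m + m : ℤ) : ℚ) := by
    rw [intVec_nsmul, bilQ_smul_right, hm]; push_cast; ring
  exact (pairP_eq_one_iff_even h).2 ⟨m, rfl⟩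

section EvenGram

variable (h2 : ∀ u v : Fin d → ℤ, ∃ m : ℤ, bilQ G (intVec u) (intVec v) = 2 * m)
include h2

lemma pairP_two_nsmul_add_left {z l : Fin d → ℚ} (hz : z ∈ dualL G) (hl : l ∈ latticeL d)
    (v : Fin d → ℤ) : pairP G (2 • z + l) v = 1 := by
  obtain ⟨w, rfl⟩ := hl
  obtain ⟨mz, hmz⟩ := hz v
  obtain ⟨ml, hml⟩ := h2 w v
  have h : bilQ G (2 • z + intVec w) (intVec v) = ((mz + ml + (mz + ml) : ℤ) : ℚ) := by
    rw [bilQ_add_left, bilQ_nsmul_left, hmz, hml]; push_cast; ring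
  exact (pairP_eq_one_iff_even h).2 ⟨mz + ml, rfl⟩

lemma pairP_congr_left {x y : Fin d → ℚ} (hx : x ∈ dualL G) (hy : y ∈ dualL G)
    (hxy : ∃ z ∈ dualL G, ∃ l ∈ latticeL d, x - y = 2 • z + l) (v : Fin d → ℤ) :
    pairP G x v = pairP G y v := by
  obtain ⟨z, hz, l, hl, hxy⟩ := hxy
  rw [← add_sub_cancel y x, pairP_add_left hy (sub_mem hx hy), hxy,
    pairP_two_nsmul_add_left h2 hz hl, mul_one]

lemma pairP_left_ker_iff {x : Fin d → ℚ} (hx : x ∈ dualL G) :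
    (∀ v : Fin d → ℤ, pairP G x v = 1) ↔ ∃ z ∈ dualL G, ∃ l ∈ latticeL d, x = 2 • z + l := by
  refine ⟨fun h => ⟨(2⁻¹ : ℚ) • x, ?_, 0, zero_mem _, ?_⟩, ?_⟩
  · intro v
    obtain ⟨m, hm⟩ := hx v
    obtain ⟨k, rfl⟩ := (pairP_eq_one_iff_even hm).1 (h v)
    exact ⟨k, by rw [bilQ_smul_left, hm]; push_cast; ring⟩
  · rw [add_zero, two_nsmul, ← add_smul]; norm_num
  · rintro ⟨z, hz, l, hl, rfl⟩ v
    exact pairP_two_nsmul_add_left h2 hz hl v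

end EvenGram

lemma pairP_congr_right {x : Fin d → ℚ} (hx : x ∈ dualL G) {v w : Fin d → ℤ}
    (hvw : ∃ u : Fin d → ℤ, v - w = 2 • u) : pairP G x v = pairP G x w := by
  obtain ⟨u, hu⟩ := hvw
  rw [← add_sub_cancel w v, pairP_add_right hx, hu, pairP_two_nsmul_right hx, mul_one]

def dualBasisVec (G : Matrix (Fin d) (Fin d) ℚ) (j : Fin d) : Fin d → ℚ :=
  Pi.single j 1 ᵥ* G⁻¹

lemma bilQ_dualBasisVec (hG : G.det ≠ 0) (j : Fin d) (y : Fin d → ℚ) :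
    bilQ G (dualBasisVec G j) y = y j := by
  rw [bilQ, dualBasisVec, dotProduct_mulVec, vecMul_vecMul,
    nonsing_inv_mul G (isUnit_iff_ne_zero.2 hG), vecMul_one, single_dotProduct, one_mul]

lemma dualBasisVec_mem_dualL (hG : G.det ≠ 0) (j : Fin d) : dualBasisVec G j ∈ dualL G :=
  fun w => ⟨w j, bilQ_dualBasisVec hG j (intVec w)⟩

lemma pairP_right_ker_iff (hG : G.det ≠ 0) (v : Fin d → ℤ) :
    (∀ x ∈ dualL G, pairP G x v = 1) ↔ ∃ u : Fin d → ℤ, v = 2 • u := by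
  refine ⟨fun h => ⟨fun j => v j / 2, funext fun j => ?_⟩, ?_⟩
  · have hv : Even (v j) := (pairP_eq_one_iff_even (bilQ_dualBasisVec hG j (intVec v))).1
      (h _ (dualBasisVec_mem_dualL hG j))
    simp only [Pi.smul_apply, nsmul_eq_mul, Nat.cast_ofNat, Int.two_mul_ediv_two_of_even hv]
  · rintro ⟨u, rfl⟩ x hx
    exact pairP_two_nsmul_right hx u

theorem stmt_13_general (d : ℕ) (G : Matrix (Fin d) (Fin d) ℚ) (hnd : G.det ≠ 0)
    (h2 : ∀ u v : Fin d → ℤ, ∃ m : ℤ, bilQ G (intVec u) (intVec v) = 2 * m) :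
    -- values in {±1}
    (∀ x : Fin d → ℚ, ∀ v : Fin d → ℤ, pairP G x v = 1 ∨ pairP G x v = -1) ∧
    -- well-defined in the first argument modulo 2L* + L
    (∀ x y : Fin d → ℚ, x ∈ dualL G → y ∈ dualL G →
      (∃ z ∈ dualL G, ∃ l ∈ latticeL d, x - y = 2 • z + l) →
      ∀ v : Fin d → ℤ, pairP G x v = pairP G y v) ∧
    -- well-defined in the second argument modulo 2L
    (∀ x : Fin d → ℚ, x ∈ dualL G → ∀ v w : Fin d → ℤ,
      (∃ u : Fin d → ℤ, v - w = 2 • u) → pairP G x v = pairP G x w) ∧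
    -- biadditive
    (∀ x y : Fin d → ℚ, x ∈ dualL G → y ∈ dualL G → ∀ v : Fin d → ℤ,
      pairP G (x + y) v = pairP G x v * pairP G y v) ∧
    (∀ x : Fin d → ℚ, x ∈ dualL G → ∀ v w : Fin d → ℤ,
      pairP G x (v + w) = pairP G x v * pairP G x w) ∧
    -- perfectness: trivial left kernel on Γ/2Γ
    (∀ x : Fin d → ℚ, x ∈ dualL G →
      ((∀ v : Fin d → ℤ, pairP G x v = 1) ↔
        ∃ z ∈ dualL G, ∃ l ∈ latticeL d, x = 2 • z + l)) ∧
    -- perfectness: trivial right kernel on L/2L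
    (∀ v : Fin d → ℤ,
      ((∀ x : Fin d → ℚ, x ∈ dualL G → pairP G x v = 1) ↔
        ∃ u : Fin d → ℤ, v = 2 • u)) :=
  ⟨fun _ _ => Int.units_eq_one_or _,
    fun _ _ hx hy hxy => pairP_congr_left h2 hx hy hxy,
    fun _ hx _ _ => pairP_congr_right hx,
    fun _ _ hx hy => pairP_add_left hx hy,
    fun _ hx => pairP_add_right hx,
    fun _ hx => pairP_left_ker_iff h2 hx,
    pairP_right_ker_iff hnd⟩

/-- Let `L` be a lattice with `⟨u,v⟩ ∈ 2ℤ` for all `u,v ∈ L`, with dual `L*` and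
`Γ = L*/L`. The pairing `p̄(a,u) = e^{2πi⟨â,u⟩/2}` is well-defined (independent of the
representative `â` of `a ∈ Γ = L*/L`, and indeed of `â` modulo `2L* + L`, and of `u`
modulo `2L`), takes values in `{±1}`, is biadditive, and descends to a perfect pairing
`p : Γ/2Γ × L/2L → {±1}`. -/
theorem stmt_13 (d : ℕ) (G : Matrix (Fin d) (Fin d) ℚ) (hsym : G.IsSymm) (hnd : G.det ≠ 0)
    (h2 : ∀ u v : Fin d → ℤ, ∃ m : ℤ, bilQ G (intVec u) (intVec v) = 2 * m) :
    -- values in {±1}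
    (∀ x : Fin d → ℚ, ∀ v : Fin d → ℤ, pairP G x v = 1 ∨ pairP G x v = -1) ∧
    -- well-defined in the first argument modulo 2L* + L
    (∀ x y : Fin d → ℚ, x ∈ dualL G → y ∈ dualL G →
      (∃ z ∈ dualL G, ∃ l ∈ latticeL d, x - y = 2 • z + l) →
      ∀ v : Fin d → ℤ, pairP G x v = pairP G y v) ∧
    -- well-defined in the second argument modulo 2L
    (∀ x : Fin d → ℚ, x ∈ dualL G → ∀ v w : Fin d → ℤ,
      (∃ u : Fin d → ℤ, v - w = 2 • u) → pairP G x v = pairP G x w) ∧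
    -- biadditive
    (∀ x y : Fin d → ℚ, x ∈ dualL G → y ∈ dualL G → ∀ v : Fin d → ℤ,
      pairP G (x + y) v = pairP G x v * pairP G y v) ∧
    (∀ x : Fin d → ℚ, x ∈ dualL G → ∀ v w : Fin d → ℤ,
      pairP G x (v + w) = pairP G x v * pairP G x w) ∧
    -- perfectness: trivial left kernel on Γ/2Γ
    (∀ x : Fin d → ℚ, x ∈ dualL G →
      ((∀ v : Fin d → ℤ, pairP G x v = 1) ↔
        ∃ z ∈ dualL G, ∃ l ∈ latticeL d, x = 2 • z + l)) ∧
    -- perfectness: trivial right kernel on L/2L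
    (∀ v : Fin d → ℤ,
      ((∀ x : Fin d → ℚ, x ∈ dualL G → pairP G x v = 1) ↔
        ∃ u : Fin d → ℤ, v = 2 • u)) :=
  stmt_13_general d G hnd h2

end
end

section
/- Let Γ be a finite abelian group with nondegenerate symmetric bimultiplicative B_Q, σ a symmetric normalised 2-cochain with σ² = B_Q and ω := ∂(σ) valued in {±1} and multiplicative in the first argument, δ ∈ Γ with 2δ = 0, and q : Γ → ℂˣ satisfying q(a)² = σ(a,a) and q(a+b)q(a)⁻¹q(b)⁻¹ = σ(a,b)ω(a+b,a,b)ω(δ,a,b) for all a,b. Then q(−a) = q(a)·ω(a+δ,a,−a) for all a ∈ Γ. -/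
/-- Let `Γ` be a finite abelian group with nondegenerate symmetric bimultiplicative
`B_Q`, `σ` a symmetric normalised 2-cochain with `σ² = B_Q` and `ω = ∂(σ)` valued in
`{±1}` and multiplicative in the first argument, `δ ∈ Γ` with `2δ = 0`, and
`q : Γ → ℂˣ` with `q(a)² = σ(a,a)` and
`q(a+b) q(a)⁻¹ q(b)⁻¹ = σ(a,b) ω(a+b,a,b) ω(δ,a,b)`. Then
`q(-a) = q(a)·ω(a+δ,a,-a)` for all `a ∈ Γ`. -/
theorem stmt_16 (Γ : Type*) [AddCommGroup Γ] [Fintype Γ]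
    (B σ : Γ → Γ → ℂˣ) (q : Γ → ℂˣ) (δ : Γ)
    (hBsym : ∀ a b : Γ, B a b = B b a)
    (hBbi₁ : ∀ a a' b : Γ, B (a + a') b = B a b * B a' b)
    (hBbi₂ : ∀ a b b' : Γ, B a (b + b') = B a b * B a b')
    (hBnd : ∀ a : Γ, (∀ b : Γ, B a b = 1) → a = 0)
    (hσsym : ∀ a b : Γ, σ a b = σ b a)
    (hσnorm : ∀ a : Γ, σ a 0 = 1 ∧ σ 0 a = 1)
    (hσsq : ∀ a b : Γ, (σ a b) ^ 2 = B a b)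
    (hωpm : ∀ a b c : Γ, dOmega σ a b c = 1 ∨ dOmega σ a b c = -1)
    (hωhom : ∀ a a' b c : Γ, dOmega σ (a + a') b c = dOmega σ a b c * dOmega σ a' b c)
    (hδ : 2 • δ = 0)
    (hq2 : ∀ a : Γ, (q a) ^ 2 = σ a a)
    (hqadd : ∀ a b : Γ, q (a + b) * (q a)⁻¹ * (q b)⁻¹ =
      σ a b * dOmega σ (a + b) a b * dOmega σ δ a b) :
    ∀ a : Γ, q (-a) = q a * dOmega σ (a + δ) a (-a) := by
  intro a
  have hω0 : ∀ b c : Γ, dOmega σ 0 b c = 1 := by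
    intro b c
    simp [dOmega, (hσnorm _).2]
  have hωright0 : ∀ x : Γ, dOmega σ x 0 0 = 1 := by
    intro x
    simp [dOmega, (hσnorm _).1]
  have hq0 : q 0 = 1 := by
    have h := hqadd 0 0
    rw [add_zero, hω0, hωright0, (hσnorm 0).1] at h
    have : (q 0)⁻¹ = 1 := by
      calc (q 0)⁻¹ = q 0 * (q 0)⁻¹ * (q 0)⁻¹ := by group
        _ = 1 := by rw [h]; simp
    simpa using this
  have h2 : (q a)⁻¹ * (q (-a))⁻¹ = σ a (-a) * dOmega σ δ a (-a) := by
    have h := hqadd a (-a)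
    rw [add_neg_cancel, hq0, hω0] at h
    calc (q a)⁻¹ * (q (-a))⁻¹ = 1 * (q a)⁻¹ * (q (-a))⁻¹ := by group
      _ = σ a (-a) * 1 * dOmega σ δ a (-a) := h
      _ = σ a (-a) * dOmega σ δ a (-a) := by rw [mul_one]
  have hσneg : σ (-a) (-a) = σ a a := by
    have h1 : dOmega σ a a (-a) * dOmega σ (-a) a (-a) = 1 := by
      rw [← hωhom, add_neg_cancel, hω0]
    have h2' : dOmega σ (-a) a (-a) * dOmega σ (-a) a (-a) = 1 := by
      rcases hωpm (-a) a (-a) with h | h <;> rw [h] <;> simp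
    have heq : dOmega σ a a (-a) = dOmega σ (-a) a (-a) := by
      calc dOmega σ a a (-a)
          = dOmega σ a a (-a) * (dOmega σ (-a) a (-a) * dOmega σ (-a) a (-a)) := by
            rw [h2', mul_one]
        _ = (dOmega σ a a (-a) * dOmega σ (-a) a (-a)) * dOmega σ (-a) a (-a) := by
            rw [mul_assoc]
        _ = dOmega σ (-a) a (-a) := by rw [h1, one_mul]
    unfold dOmega at heq
    rw [add_neg_cancel, (hσnorm a).1, (hσnorm (-a)).1, hσsym (-a) a] at heq
    simp only [inv_one, mul_one] at heq
    have := mul_right_cancel (a := σ a a) (b := σ a (-a)) (c := σ (-a) (-a))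
      (by rw [heq, mul_comm])
    exact this.symm
  have hinv : (q (-a))⁻¹ = q a * (σ a (-a) * dOmega σ δ a (-a)) := by
    rw [← h2]; group
  have hexp : q (-a) * q (-a) = σ (-a) (-a) := by
    have := hq2 (-a); rwa [sq] at this
  have hωa : dOmega σ a a (-a) = σ a a * σ a (-a) := by
    unfold dOmega
    rw [add_neg_cancel, (hσnorm a).1]
    simp
  calc q (-a) = (q (-a) * q (-a)) * (q (-a))⁻¹ := by group
    _ = σ (-a) (-a) * (q a * (σ a (-a) * dOmega σ δ a (-a))) := by rw [hexp, hinv]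
    _ = q a * ((σ a a * σ a (-a)) * dOmega σ δ a (-a)) := by
        rw [hσneg]
        simp [mul_comm, mul_left_comm, mul_assoc]
    _ = q a * dOmega σ (a + δ) a (-a) := by rw [hωhom, hωa]
end

section
/- Let Γ be a finite abelian group with nondegenerate symmetric bimultiplicative form B_Q (square of σ as in the standing assumptions), δ ∈ Γ with 2δ = 0, and q satisfying q(a)² = σ(a,a) and q(a+b)q(a)⁻¹q(b)⁻¹ = σ(a,b)ω(a+b,a,b)ω(δ,a,b). Define α²·q(r+s) := ε·|2Γ|^{-1/2}·Σ_{t ∈ r̄+s̄+δ̄} σ(t, r+s)·q(t)⁻¹ where the sum is over the 2Γ-coset of r+s+δ. Then this sum is independent of the decomposition: for all b ∈ Γ, ε·|2Γ|^{-1/2}·Σ_{t ∈ b̄+δ̄} σ(t,b)·q(t)⁻¹ = q(b) · (ε·|2Γ|^{-1/2}·Σ_{a ∈ δ̄} q(a)⁻¹), where δ̄, b̄ denote cosets modulo 2Γ. -/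
open scoped Classical

/-!
Translating by `b` maps the coset `δ + 2Γ` onto `b + δ + 2Γ`, so it suffices to show
`σ(a+b,b) q(a+b)⁻¹ = q(b) q(a)⁻¹` for `a ∈ δ + 2Γ`. Expanding `q(a+b)` by the defining relation
of `q` and `σ(a+b,b) = σ(b,a+b)` by the definition of `ω`, both sides agree up to the factor
`ω(a+b,a,b) ω(δ,a,b) ω(b,a,b) = ω(a+2b+δ,a,b)`. Since `a + 2b + δ ∈ 2Γ` and `ω` is a `{±1}`-valued
homomorphism in its first argument, this factor is `1`.
-/

theorem Finset.sum_filter_coset_add {Γ M : Type*} [AddCommGroup Γ] [Fintype Γ] [AddCommMonoid M]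
    (f : Γ → M) (n : ℕ) (x b : Γ) :
    ∑ t ∈ univ.filter fun t : Γ => ∃ c : Γ, t = b + x + n • c, f t =
      ∑ a ∈ univ.filter fun a : Γ => ∃ c : Γ, a = x + n • c, f (a + b) := by
  refine Finset.sum_nbij' (· - b) (· + b) ?_ ?_ ?_ ?_ ?_
  · intro t ht
    obtain ⟨c, rfl⟩ := (mem_filter.mp ht).2
    exact mem_filter.mpr ⟨mem_univ _, c, by abel⟩
  · intro a ha
    obtain ⟨c, rfl⟩ := (mem_filter.mp ha).2
    exact mem_filter.mpr ⟨mem_univ _, c, by abel⟩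
  all_goals simp

section

variable {Γ : Type*} [AddCommGroup Γ] {σ : Γ → Γ → ℂˣ}

theorem dOmega_add_self (hωpm : ∀ a b c : Γ, dOmega σ a b c = 1 ∨ dOmega σ a b c = -1)
    (hωhom : ∀ a a' b c : Γ, dOmega σ (a + a') b c = dOmega σ a b c * dOmega σ a' b c)
    (x b c : Γ) : dOmega σ (x + x) b c = 1 := by
  rw [hωhom]
  rcases hωpm x b c with h | h <;> simp [h]

theorem sigma_add_mul_inv_q_add {q : Γ → ℂˣ} {δ : Γ}
    (hσsym : ∀ a b : Γ, σ a b = σ b a)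
    (hωpm : ∀ a b c : Γ, dOmega σ a b c = 1 ∨ dOmega σ a b c = -1)
    (hωhom : ∀ a a' b c : Γ, dOmega σ (a + a') b c = dOmega σ a b c * dOmega σ a' b c)
    (hq2 : ∀ a : Γ, (q a) ^ 2 = σ a a)
    (hqadd : ∀ a b : Γ, q (a + b) * (q a)⁻¹ * (q b)⁻¹ =
      σ a b * dOmega σ (a + b) a b * dOmega σ δ a b)
    {a : Γ} (ha : ∃ c : Γ, a = δ + 2 • c) (b : Γ) :
    ((σ (a + b) b : ℂˣ) : ℂ) * ((q (a + b) : ℂˣ) : ℂ)⁻¹ = (q b : ℂ) * ((q a : ℂˣ) : ℂ)⁻¹ := by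
  have hω : ((dOmega σ (a + b) a b : ℂˣ) : ℂ) * dOmega σ δ a b * dOmega σ b a b = 1 := by
    obtain ⟨c, rfl⟩ := ha
    rw [← Units.val_mul, ← Units.val_mul, ← hωhom, ← hωhom,
      show δ + 2 • c + b + δ + b = (c + b + δ) + (c + b + δ) by abel,
      dOmega_add_self hωpm hωhom, Units.val_one]
  have hq : (q (a + b) : ℂ) = σ a b * dOmega σ (a + b) a b * dOmega σ δ a b * q b * q a := by
    have h := hqadd a b
    rw [mul_inv_eq_iff_eq_mul, mul_inv_eq_iff_eq_mul] at h
    simp [h]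
  have hσ : (σ (a + b) b : ℂ) * dOmega σ b a b = σ a b * q b ^ 2 := by
    rw [hσsym, ← Units.val_mul, dOmega, mul_comm, inv_mul_cancel_right, hσsym b a, ← hq2,
      Units.val_mul, Units.val_pow_eq_pow_val]

  rw [← div_eq_mul_inv, ← div_eq_mul_inv, div_eq_div_iff (Units.ne_zero _) (Units.ne_zero _)]
  linear_combination (-(q b : ℂ)) * hq + (q a : ℂ) * dOmega σ (a + b) a b * dOmega σ δ a b * hσ
    - (σ (a + b) b : ℂ) * q a * hω

end

theorem stmt_19_general (Γ : Type*) [AddCommGroup Γ] [Fintype Γ]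
    (σ : Γ → Γ → ℂˣ) (q : Γ → ℂˣ) (δ : Γ) (ε : ℂ)
    (hσsym : ∀ a b : Γ, σ a b = σ b a)
    (hωpm : ∀ a b c : Γ, dOmega σ a b c = 1 ∨ dOmega σ a b c = -1)
    (hωhom : ∀ a a' b c : Γ, dOmega σ (a + a') b c = dOmega σ a b c * dOmega σ a' b c)
    (hq2 : ∀ a : Γ, (q a) ^ 2 = σ a a)
    (hqadd : ∀ a b : Γ, q (a + b) * (q a)⁻¹ * (q b)⁻¹ =
      σ a b * dOmega σ (a + b) a b * dOmega σ δ a b) :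
    ∀ b : Γ,
      ε * ((Real.sqrt ((Finset.univ.filter fun x : Γ => ∃ c : Γ, x = 2 • c).card) : ℂ))⁻¹ *
          ∑ t ∈ Finset.univ.filter fun t : Γ => ∃ c : Γ, t = b + δ + 2 • c,
            ((σ t b : ℂˣ) : ℂ) * (((q t : ℂˣ) : ℂ))⁻¹ =
        ((q b : ℂˣ) : ℂ) *
          (ε * ((Real.sqrt ((Finset.univ.filter fun x : Γ => ∃ c : Γ, x = 2 • c).card) : ℂ))⁻¹ *
            ∑ a ∈ Finset.univ.filter fun t : Γ => ∃ c : Γ, t = δ + 2 • c,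
              (((q a : ℂˣ) : ℂ))⁻¹) := by
  intro b
  rw [Finset.sum_filter_coset_add, Finset.sum_congr rfl fun a ha =>
    sigma_add_mul_inv_q_add hσsym hωpm hωhom hq2 hqadd (Finset.mem_filter.mp ha).2 b,
    ← Finset.mul_sum]
  ring

/-- Let `Γ` be a finite abelian group with nondegenerate symmetric bimultiplicative
`B_Q = σ²`, `σ` symmetric normalised with `ω = ∂(σ)` valued in `{±1}` and a
homomorphism in the first argument, `δ ∈ Γ` with `2δ = 0`, `q` satisfying
`q(a)² = σ(a,a)` and `q(a+b) q(a)⁻¹ q(b)⁻¹ = σ(a,b) ω(a+b,a,b) ω(δ,a,b)`, and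
`ε ∈ {±1}`. Then for all `b ∈ Γ`,
`ε |2Γ|^{-1/2} Σ_{t ∈ b̄+δ̄} σ(t,b) q(t)⁻¹ = q(b) · (ε |2Γ|^{-1/2} Σ_{a ∈ δ̄} q(a)⁻¹)`,
where the sums run over the indicated cosets of `2Γ`. -/
theorem stmt_19 (Γ : Type*) [AddCommGroup Γ] [Fintype Γ]
    (B σ : Γ → Γ → ℂˣ) (q : Γ → ℂˣ) (δ : Γ) (ε : ℂ)
    (hBsym : ∀ a b : Γ, B a b = B b a)
    (hBbi₁ : ∀ a a' b : Γ, B (a + a') b = B a b * B a' b)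
    (hBbi₂ : ∀ a b b' : Γ, B a (b + b') = B a b * B a b')
    (hBnd : ∀ a : Γ, (∀ b : Γ, B a b = 1) → a = 0)
    (hσsym : ∀ a b : Γ, σ a b = σ b a)
    (hσnorm : ∀ a : Γ, σ a 0 = 1 ∧ σ 0 a = 1)
    (hσsq : ∀ a b : Γ, (σ a b) ^ 2 = B a b)
    (hωpm : ∀ a b c : Γ, dOmega σ a b c = 1 ∨ dOmega σ a b c = -1)
    (hωhom : ∀ a a' b c : Γ, dOmega σ (a + a') b c = dOmega σ a b c * dOmega σ a' b c)
    (hδ : 2 • δ = 0)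
    (hq2 : ∀ a : Γ, (q a) ^ 2 = σ a a)
    (hqadd : ∀ a b : Γ, q (a + b) * (q a)⁻¹ * (q b)⁻¹ =
      σ a b * dOmega σ (a + b) a b * dOmega σ δ a b)
    (hε : ε = 1 ∨ ε = -1) :
    ∀ b : Γ,
      ε * ((Real.sqrt ((Finset.univ.filter fun x : Γ => ∃ c : Γ, x = 2 • c).card) : ℂ))⁻¹ *
          ∑ t ∈ Finset.univ.filter fun t : Γ => ∃ c : Γ, t = b + δ + 2 • c,
            ((σ t b : ℂˣ) : ℂ) * (((q t : ℂˣ) : ℂ))⁻¹ =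
        ((q b : ℂˣ) : ℂ) *
          (ε * ((Real.sqrt ((Finset.univ.filter fun x : Γ => ∃ c : Γ, x = 2 • c).card) : ℂ))⁻¹ *
            ∑ a ∈ Finset.univ.filter fun t : Γ => ∃ c : Γ, t = δ + 2 • c,
              (((q a : ℂˣ) : ℂ))⁻¹) :=
  stmt_19_general Γ σ q δ ε hσsym hωpm hωhom hq2 hqadd
end
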